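/- If a propositional logic with values in a finite set V of cardinality n (with designated value τ and truth-table operations) makes (p → p) ∨ q a tautology, then the formula ⋁_{i<j≤n} (p_i → p_j) over n+1 distinct atoms is a tautology: every valuation ν : atoms → V maps it to τ. -/

import Mathlib

inductive Fm (α : Type) : Type where
  | top  : Fm α
  | atom : α → Fm α
  | neg  : Fm α → Fm α
  | and  : Fm α → Fm α → Fm α
  | or   : Fm α → Fm α → Fm α
  | imp  : Fm α → Fm α → Fm α

/-- A many-valued truth table: a designated value and operations for the connectives. -/
structure MVLogic (V : Type) where
  tau : V
  mneg : V → V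
  mand : V → V → V
  mor  : V → V → V
  mimp : V → V → V

/-- Homomorphic extension of a valuation of the atoms to all formulas. -/
def MVLogic.eval {V α : Type} (L : MVLogic V) (ν : α → V) : Fm α → V
  | .top => L.tau
  | .atom p => ν p
  | .neg φ => L.mneg (L.eval ν φ)
  | .and φ ψ => L.mand (L.eval ν φ) (L.eval ν ψ)
  | .or φ ψ => L.mor (L.eval ν φ) (L.eval ν ψ)
  | .imp φ ψ => L.mimp (L.eval ν φ) (L.eval ν ψ)

/-- Disjunction of a (nonempty) list of formulas, associated to the right. -/
def disj {α : Type} : List (Fm α) → Fm α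
  | [] => Fm.top
  | [φ] => φ
  | φ :: ψ :: rest => Fm.or φ (disj (ψ :: rest))

/-- The list of formulas  pᵢ → pⱼ  for  i < j ≤ n  (atoms indexed by natural numbers). -/
def pairFms (n : ℕ) : List (Fm ℕ) :=
  (List.range (n+1)).flatMap (fun i =>
    (List.range (n+1)).filterMap (fun j =>
      if i < j then some (Fm.imp (Fm.atom i) (Fm.atom j)) else none))

/-!
By pigeonhole two of the `n + 1` atoms `pᵢ, pⱼ` (`i < j`) receive the same value `a`, so the
disjunct `pᵢ → pⱼ` takes the value `a → a`. The tautology `(p → p) ∨ q` with commutativity makes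
`a → a` absorb every disjunction into `τ`; since `τ = (τ → τ) ∨ τ`, associativity shows that `τ`
is absorbing as well, so the designated value propagates through the whole disjunction.
-/

namespace MVLogic

variable {V : Type} (L : MVLogic V)

def ForcesOr (x : V) : Prop :=
  ∀ y, L.mor x y = L.tau ∧ L.mor y x = L.tau

theorem forcesOr_of_comm {x : V} (hcomm : ∀ a b, L.mor a b = L.mor b a)
    (hx : ∀ y, L.mor x y = L.tau) : L.ForcesOr x :=
  fun y => ⟨hx y, hcomm y x ▸ hx y⟩

theorem mor_mimp_self_eq_tau
    (htaut : ∀ ν : ℕ → V,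
      L.eval ν (Fm.or (Fm.imp (Fm.atom 0) (Fm.atom 0)) (Fm.atom 1)) = L.tau)
    (a b : V) : L.mor (L.mimp a a) b = L.tau := by
  simpa [MVLogic.eval] using htaut fun k => if k = 0 then a else b

theorem forcesOr_tau (hcomm : ∀ a b, L.mor a b = L.mor b a)
    (hassoc : ∀ a b c, L.mor (L.mor a b) c = L.mor a (L.mor b c))
    (hself : ∀ a b, L.mor (L.mimp a a) b = L.tau) : L.ForcesOr L.tau := by
  refine L.forcesOr_of_comm hcomm fun y => ?_
  calc L.mor L.tau y = L.mor (L.mor (L.mimp L.tau L.tau) L.tau) y := by rw [hself]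
    _ = L.tau := by rw [hassoc, hself]

theorem eval_disj_eq_tau_of_mem {α : Type} (ν : α → V) (hτ : L.ForcesOr L.tau) :
    ∀ {l : List (Fm α)}, 2 ≤ l.length → ∀ {φ}, φ ∈ l → L.ForcesOr (L.eval ν φ) →
      L.eval ν (disj l) = L.tau
  | φ :: ψ :: rest, _, χ, hχ, hforce => by
    change L.mor (L.eval ν φ) (L.eval ν (disj (ψ :: rest))) = L.tau
    rcases List.mem_cons.mp hχ with rfl | hχ
    · exact (hforce _).1
    · cases rest with
      | nil =>
        obtain rfl : χ = ψ := List.mem_singleton.mp hχ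
        exact (hforce _).2
      | cons ψ' rest' =>
        rw [eval_disj_eq_tau_of_mem ν hτ (by simp) hχ hforce]
        exact (hτ _).2

end MVLogic

theorem mem_pairFms {n i j : ℕ} (hij : i < j) (hj : j ≤ n) :
    Fm.imp (Fm.atom i) (Fm.atom j) ∈ pairFms n := by
  simp only [pairFms, List.mem_flatMap, List.mem_filterMap, List.mem_range]
  exact ⟨i, by omega, j, by omega, by simp [hij]⟩

theorem two_le_length_pairFms {n : ℕ} (hn : 2 ≤ n) : 2 ≤ (pairFms n).length := by
  have hsub : [Fm.imp (Fm.atom 0) (Fm.atom 1), Fm.imp (Fm.atom 0) (Fm.atom 2)] ⊆ pairFms n := by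
    simp [mem_pairFms, show 1 ≤ n by omega, hn]
  simpa using (List.nodup_cons.mpr ⟨by simp, List.nodup_singleton _⟩).length_le_of_subset hsub

theorem exists_lt_le_map_eq {V : Type} [Fintype V] {n : ℕ} (hcard : Fintype.card V = n)
    (ν : ℕ → V) : ∃ i j, i < j ∧ j ≤ n ∧ ν i = ν j := by
  obtain ⟨i, hi, j, hj, hne, heq⟩ :=
    Finset.exists_ne_map_eq_of_card_lt_of_maps_to (s := Finset.range (n + 1))
      (t := Finset.univ) (by simp [hcard]) (f := ν) (fun _ _ => Finset.mem_coe.mpr (Finset.mem_univ _))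
  rw [Finset.mem_range] at hi hj
  rcases hne.lt_or_gt with hij | hji
  · exact ⟨i, j, hij, by omega, heq⟩
  · exact ⟨j, i, hji, by omega, heq.symm⟩

theorem pigeonhole_tautology (V : Type) [Fintype V] (n : ℕ) (hcard : Fintype.card V = n)
    (L : MVLogic V)
    (hcomm : ∀ a b, L.mor a b = L.mor b a)
    (hassoc : ∀ a b c, L.mor (L.mor a b) c = L.mor a (L.mor b c))
    (htaut : ∀ ν : ℕ → V,
      L.eval ν (Fm.or (Fm.imp (Fm.atom 0) (Fm.atom 0)) (Fm.atom 1)) = L.tau) :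
    ∀ ν : ℕ → V, L.eval ν (disj (pairFms n)) = L.tau := by
  intro ν
  rcases le_or_gt n 1 with hn | hn
  · have : Subsingleton V := Fintype.card_le_one_iff_subsingleton.mp (hcard ▸ hn)
    exact Subsingleton.elim _ _
  have hself := L.mor_mimp_self_eq_tau htaut
  obtain ⟨i, j, hij, hj, heq⟩ := exists_lt_le_map_eq hcard ν
  refine L.eval_disj_eq_tau_of_mem ν (L.forcesOr_tau hcomm hassoc hself)
    (two_le_length_pairFms hn) (mem_pairFms hij hj) (L.forcesOr_of_comm hcomm fun y => ?_)
  simpa only [MVLogic.eval, heq] using hself (ν j) y
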